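/- With γ < 0, β > 0, and Σ_{m≠0} ∫_L (Cᵐ)² γ dJ < 0 as above, the quadratic form G[{fₙ}] = Σ_{n≠0} ∫_L (β/γ) fₙ² dJ + 2πβ(Σ_{n≠0} ∫_L Cⁿ fₙ dJ)² is negative definite on the space of nonzero square-summable perturbation sequences if and only if 1 + 2π Σ_{m≠0} ∫_L (Cᵐ)² γ dJ > 0. -/

import Mathlib

/-!
For every real `t`, `(β/γ)(fₙ + t γ Cⁿ)² ≤ 0` expands to
`(β/γ) fₙ² + 2tβ Cⁿ fₙ + t²β (Cⁿ)² γ ≤ 0`; integrating and summing over `n` shows that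
`t ↦ βA t² + 2βS t + B` is nonpositive, where `A = Σ ∫ (Cⁿ)² γ`, `S = Σ ∫ Cⁿ fₙ` and
`B = Σ ∫ (β/γ) fₙ²`. Its discriminant gives `β S² ≤ A B`, hence `G ≤ B (1 + 2πA)` when `π ≥ 0`
(and `G ≤ B` when `π < 0`), which is negative as soon as `B < 0` and `1 + 2πA > 0`.
Conversely the sequence `fₙ = Cⁿ γ`, for which the Cauchy–Schwarz bound is an equality, has
`G = β A (1 + 2πA)`.
-/

open MeasureTheory

lemma sq_le_mul_of_forall_quadratic_nonpos {a s b : ℝ}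
    (h : ∀ t : ℝ, a * t ^ 2 + 2 * s * t + b ≤ 0) : s ^ 2 ≤ a * b := by
  have := discrim_le_zero (a := -a) (b := -(2 * s)) (c := -b) fun t => by nlinarith [h t]
  rw [discrim] at this
  linarith

lemma integral_mul_sq_nonpos {L : Type*} [MeasurableSpace L] {μ : Measure L} {w f : L → ℝ}
    (hw : ∀ x, w x ≤ 0) : ∫ x, w x * f x ^ 2 ∂μ ≤ 0 :=
  integral_nonpos fun x => mul_nonpos_of_nonpos_of_nonneg (hw x) (sq_nonneg _)

lemma integral_mul_sq_neg {L : Type*} [MeasurableSpace L] {μ : Measure L} {w f : L → ℝ}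
    (hw : ∀ x, w x < 0) (hint : Integrable (fun x => w x * f x ^ 2) μ) (hf : ¬ f =ᵐ[μ] 0) :
    ∫ x, w x * f x ^ 2 ∂μ < 0 := by
  refine (integral_mul_sq_nonpos fun x => (hw x).le).lt_of_ne fun h0 => hf ?_
  have hzero : (fun x => -(w x * f x ^ 2)) =ᵐ[μ] 0 :=
    (integral_eq_zero_iff_of_nonneg
      (fun x => neg_nonneg.2 (mul_nonpos_of_nonpos_of_nonneg (hw x).le (sq_nonneg _))) hint.neg).1
      (by rw [integral_neg, h0, neg_zero])
  filter_upwards [hzero] with x hx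
  simpa [(hw x).ne] using hx

lemma not_mul_ae_eq_zero_of_integral_sq_mul_ne_zero {L : Type*} [MeasurableSpace L]
    {μ : Measure L} {c g : L → ℝ} (h : ∫ x, c x ^ 2 * g x ∂μ ≠ 0) :
    ¬ (fun x => c x * g x) =ᵐ[μ] 0 := by
  refine fun hcg => h (integral_eq_zero_of_ae ?_)
  filter_upwards [hcg] with x hx
  simp only [Pi.zero_apply] at hx ⊢
  rw [sq, mul_assoc, hx, mul_zero]

section Quadratic

variable {L ι : Type*} [MeasurableSpace L] {μ : Measure L} {γ : L → ℝ} {β : ℝ}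

lemma integral_quadratic_nonpos {c f : L → ℝ} (hγ : ∀ x, γ x < 0) (hβ : 0 ≤ β)
    (hc : Integrable (fun x => c x ^ 2 * γ x) μ) (hcf : Integrable (fun x => c x * f x) μ)
    (hf : Integrable (fun x => β / γ x * f x ^ 2) μ) (t : ℝ) :
    (β * ∫ x, c x ^ 2 * γ x ∂μ) * t ^ 2 + 2 * (β * ∫ x, c x * f x ∂μ) * t
      + ∫ x, β / γ x * f x ^ 2 ∂μ ≤ 0 := by
  have hsq : ∀ x, β * (c x ^ 2 * γ x) * t ^ 2 + 2 * (β * (c x * f x)) * t + β / γ x * f x ^ 2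
      = β / γ x * (f x + t * γ x * c x) ^ 2 := fun x => by
    field_simp [(hγ x).ne]
    ring
  calc _ = ∫ x, β * (c x ^ 2 * γ x) * t ^ 2 + 2 * (β * (c x * f x)) * t
        + β / γ x * f x ^ 2 ∂μ := by
        rw [integral_add, integral_add]
        · simp only [integral_mul_const, integral_const_mul]
        all_goals fun_prop
    _ = ∫ x, β / γ x * (f x + t * γ x * c x) ^ 2 ∂μ := by simp_rw [hsq]
    _ ≤ 0 := integral_nonpos fun x => mul_nonpos_of_nonpos_of_nonneg
        (div_nonpos_of_nonneg_of_nonpos hβ (hγ x).le) (sq_nonneg _)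

lemma tsum_quadratic_nonpos {c f : ι → L → ℝ} (hγ : ∀ x, γ x < 0) (hβ : 0 ≤ β)
    (hc : ∀ n, Integrable (fun x => c n x ^ 2 * γ x) μ)
    (hcf : ∀ n, Integrable (fun x => c n x * f n x) μ)
    (hf : ∀ n, Integrable (fun x => β / γ x * f n x ^ 2) μ)
    (hcs : Summable fun n => ∫ x, c n x ^ 2 * γ x ∂μ)
    (hcfs : Summable fun n => ∫ x, c n x * f n x ∂μ)
    (hfs : Summable fun n => ∫ x, β / γ x * f n x ^ 2 ∂μ) (t : ℝ) :
    (β * ∑' n, ∫ x, c n x ^ 2 * γ x ∂μ) * t ^ 2 + 2 * (β * ∑' n, ∫ x, c n x * f n x ∂μ) * t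
      + ∑' n, ∫ x, β / γ x * f n x ^ 2 ∂μ ≤ 0 := by
  calc _ = ∑' n, ((β * ∫ x, c n x ^ 2 * γ x ∂μ) * t ^ 2 + 2 * (β * ∫ x, c n x * f n x ∂μ) * t
        + ∫ x, β / γ x * f n x ^ 2 ∂μ) := by
        have hcs' := (hcs.mul_left β).mul_right (t ^ 2)
        have hcfs' := ((hcfs.mul_left β).mul_left 2).mul_right t
        rw [(hcs'.add hcfs').tsum_add hfs, hcs'.tsum_add hcfs', tsum_mul_right, tsum_mul_right,
          tsum_mul_left, tsum_mul_left, tsum_mul_left]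
    _ ≤ 0 := tsum_nonpos fun n => integral_quadratic_nonpos hγ hβ (hc n) (hcf n) (hf n) t

theorem tsum_add_mul_sq_tsum_neg {c f : ι → L → ℝ} (k : ℝ) (hγ : ∀ x, γ x < 0) (hβ : 0 < β)
    (hc : ∀ n, Integrable (fun x => c n x ^ 2 * γ x) μ)
    (hcf : ∀ n, Integrable (fun x => c n x * f n x) μ)
    (hf : ∀ n, Integrable (fun x => β / γ x * f n x ^ 2) μ)
    (hcs : Summable fun n => ∫ x, c n x ^ 2 * γ x ∂μ)
    (hcfs : Summable fun n => ∫ x, c n x * f n x ∂μ)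
    (hfs : Summable fun n => ∫ x, β / γ x * f n x ^ 2 ∂μ)
    (hk : 0 < 1 + k * ∑' n, ∫ x, c n x ^ 2 * γ x ∂μ) (hne : ∃ n, ¬ f n =ᵐ[μ] 0) :
    ∑' n, ∫ x, β / γ x * f n x ^ 2 ∂μ + k * β * (∑' n, ∫ x, c n x * f n x ∂μ) ^ 2 < 0 := by
  set A := ∑' n, ∫ x, c n x ^ 2 * γ x ∂μ
  set S := ∑' n, ∫ x, c n x * f n x ∂μ
  set B := ∑' n, ∫ x, β / γ x * f n x ^ 2 ∂μ
  have hw : ∀ x, β / γ x < 0 := fun x => div_neg_of_pos_of_neg hβ (hγ x)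
  have hB : B < 0 := by
    obtain ⟨m, hm⟩ := hne
    simpa using hfs.tsum_lt_tsum (g := 0) (fun n => integral_mul_sq_nonpos fun x => (hw x).le)
      (integral_mul_sq_neg hw (hf m) hm) summable_zero
  have hCS : β * S ^ 2 ≤ A * B := by
    have := sq_le_mul_of_forall_quadratic_nonpos
      (tsum_quadratic_nonpos hγ hβ.le hc hcf hf hcs hcfs hfs)
    exact le_of_mul_le_mul_left (by linear_combination this) hβ
  rcases le_or_gt 0 k with hk0 | hk0
  · calc B + k * β * S ^ 2 ≤ B + k * (A * B) := by
          linear_combination mul_le_mul_of_nonneg_left hCS hk0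
      _ = B * (1 + k * A) := by ring
      _ < 0 := mul_neg_of_neg_of_pos hB hk
  · have : k * β * S ^ 2 ≤ 0 :=
      mul_nonpos_of_nonpos_of_nonneg (mul_nonpos_of_nonpos_of_nonneg hk0.le hβ.le) (sq_nonneg _)
    linarith

end Quadratic

/-- Formal stability criterion: with `γ < 0`, `β > 0`, and
`A = Σ_{m≠0} ∫ (Cᵐ)² γ dJ < 0`, the quadratic form
`G[{fₙ}] = Σ_{n≠0} ∫ (β/γ) fₙ² + 2πβ (Σ_{n≠0} ∫ Cⁿ fₙ)²` is negative definite on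
nonzero admissible perturbation sequences iff `1 + 2πA > 0`. -/
theorem stmt_16 {L : Type*} [MeasureSpace L] (γ : L → ℝ) (C : ℤ → L → ℝ) (β : ℝ)
    (hγ : ∀ x, γ x < 0) (hβ : 0 < β)
    (hCint : ∀ n : ℤ, Integrable (fun x => (C n x) ^ 2 * γ x))
    (hCsum : Summable (fun n : {n : ℤ // n ≠ 0} => ∫ x, (C n.1 x) ^ 2 * γ x))
    (hA : (∑' n : {n : ℤ // n ≠ 0}, ∫ x, (C n.1 x) ^ 2 * γ x) < 0) :
    (∀ f : ℤ → L → ℝ,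
        (∀ n : ℤ, Integrable (fun x => (β / γ x) * (f n x) ^ 2)) →
        (∀ n : ℤ, Integrable (fun x => C n x * f n x)) →
        Summable (fun n : {n : ℤ // n ≠ 0} => ∫ x, (β / γ x) * (f n.1 x) ^ 2) →
        Summable (fun n : {n : ℤ // n ≠ 0} => ∫ x, C n.1 x * f n.1 x) →
        (∃ n : ℤ, n ≠ 0 ∧ ¬ (f n =ᵐ[(volume : Measure L)] 0)) →
        (∑' n : {n : ℤ // n ≠ 0}, ∫ x, (β / γ x) * (f n.1 x) ^ 2)
            + 2 * π * β * (∑' n : {n : ℤ // n ≠ 0}, ∫ x, C n.1 x * f n.1 x) ^ 2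
          < 0)
      ↔ 0 < 1 + 2 * π * ∑' m : {m : ℤ // m ≠ 0}, ∫ y, (C m.1 y) ^ 2 * γ y := by
  constructor
  · intro hG
    have hb : ∀ n, (fun x => β / γ x * (C n x * γ x) ^ 2) = fun x => β * (C n x ^ 2 * γ x) :=
      fun n => funext fun x => by field_simp [(hγ x).ne]
    have hs : ∀ n, (fun x => C n x * (C n x * γ x)) = fun x => C n x ^ 2 * γ x :=
      fun n => funext fun x => by ring
    obtain ⟨⟨n, hn⟩, hAn⟩ : ∃ n : {n : ℤ // n ≠ 0}, ∫ x, C n.1 x ^ 2 * γ x ≠ 0 := by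
      by_contra! h
      simp [h] at hA
    have hG' := hG (fun n x => C n x * γ x) (fun n => by rw [hb]; exact (hCint n).const_mul β)
      (fun n => by rw [hs]; exact hCint n)
      (by simp_rw [hb, integral_const_mul]; exact hCsum.mul_left β) (by simp_rw [hs]; exact hCsum)
      ⟨n, hn, not_mul_ae_eq_zero_of_integral_sq_mul_ne_zero hAn⟩
    simp_rw [hb, hs, integral_const_mul, tsum_mul_left] at hG'
    exact pos_of_mul_neg_right (by linear_combination hG') (mul_neg_of_pos_of_neg hβ hA).le
  · rintro hk f hf hcf hfs hcfs ⟨n, hn, hfn⟩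
    exact tsum_add_mul_sq_tsum_neg (2 * π) hγ hβ (fun n => hCint n.1) (fun n => hcf n.1)
      (fun n => hf n.1) hCsum hcfs hfs hk ⟨⟨n, hn⟩, hfn⟩
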